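/- arXiv:1308.3968 — 4 statements merged into one kernel-verified Lean document; each statement's English description precedes it below -/
import Mathlib

section
/- Let Θ be a nonempty compact subset of ℝ^p, let Y₁,…,Yₙ be points of ℝ^d, and let f : ℝ^d × Θ → ℝ be such that θ ↦ f(y;θ) is continuous for each y. Define Γ = {(f(Y₁;θ),…,f(Yₙ;θ)) : θ ∈ Θ} ⊆ ℝⁿ. Then the set of mixture value vectors {( ∫_Θ f(Y₁;θ) dG(θ), …, ∫_Θ f(Yₙ;θ) dG(θ) ) : G a Borel probability measure on Θ} equals the convex hull of Γ. -/
/-!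
The barycentre `∫ g dG` of a probability measure concentrated on `Θ` lies in every closed convex
set containing `g(Θ)`. Since `g(Θ)` is compact and the ambient space is finite-dimensional,
Carathéodory's theorem makes its convex hull compact, hence closed, so barycentres lie in the
convex hull. Conversely Dirac masses realise the points of `g(Θ)`, and convex combinations of
measures realise convex combinations of barycentres.
-/

open MeasureTheory Set

section Caratheodory

variable {𝕜 E : Type*} [Field 𝕜] [LinearOrder 𝕜] [IsStrictOrderedRing 𝕜]
  [AddCommGroup E] [Module 𝕜 E] [FiniteDimensional 𝕜 E]

/-- Carathéodory's theorem, padded with zero weights to a fixed number of points. -/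
theorem exists_stdSimplex_fin_finrank_succ_of_mem_convexHull {s : Set E} (hs : s.Nonempty)
    {x : E} (hx : x ∈ convexHull 𝕜 s) :
    ∃ w ∈ stdSimplex 𝕜 (Fin (Module.finrank 𝕜 E + 1)),
      ∃ z : Fin (Module.finrank 𝕜 E + 1) → E, (∀ i, z i ∈ s) ∧ ∑ i, w i • z i = x := by
  classical
  obtain ⟨ι, _, z, w, hzs, hind, hw_pos, hw_sum, rfl⟩ := eq_pos_convex_span_of_mem_convexHull hx
  have hcard : Fintype.card ι ≤ Fintype.card (Fin (Module.finrank 𝕜 E + 1)) := by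
    simpa using hind.card_le_finrank_succ.trans (Nat.succ_le_succ (Submodule.finrank_le _))
  obtain ⟨e⟩ := Function.Embedding.nonempty_iff_card_le.2 hcard
  obtain ⟨x₀, hx₀⟩ := hs
  refine ⟨Function.extend e w 0, ⟨fun j => ?_, ?_⟩, Function.extend e z fun _ => x₀,
    fun j => ?_, ?_⟩
  · by_cases hj : j ∈ range e
    · obtain ⟨i, rfl⟩ := hj
      simpa [e.injective.extend_apply] using (hw_pos i).le
    · simp [Function.extend_apply' _ _ _ hj]
  · rw [← Fintype.sum_of_injective e e.injective w _
      (fun j hj => by simp [Function.extend_apply' _ _ _ hj])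
      fun i => (e.injective.extend_apply _ _ i).symm, hw_sum]
  · by_cases hj : j ∈ range e
    · obtain ⟨i, rfl⟩ := hj
      simpa [e.injective.extend_apply] using hzs (mem_range_self i)
    · simpa [Function.extend_apply' _ _ _ hj] using hx₀
  · refine (Fintype.sum_of_injective e e.injective (fun i => w i • z i) _
      (fun j hj => ?_) fun i => ?_).symm
    · simp [Function.extend_apply' _ _ _ hj]
    · simp [e.injective.extend_apply]

end Caratheodory

theorem IsCompact.convexHull {E : Type*} [AddCommGroup E] [Module ℝ E] [TopologicalSpace E]
    [ContinuousAdd E] [ContinuousSMul ℝ E] [FiniteDimensional ℝ E] {K : Set E}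
    (hK : IsCompact K) : IsCompact (_root_.convexHull ℝ K) := by
  rcases K.eq_empty_or_nonempty with rfl | hne
  · simp
  set m := Module.finrank ℝ E + 1
  have hK_hull : _root_.convexHull ℝ K = (fun q : (Fin m → ℝ) × (Fin m → E) => ∑ i, q.1 i • q.2 i) ''
      (stdSimplex ℝ (Fin m) ×ˢ univ.pi fun _ => K) := by
    refine Subset.antisymm (fun x hx => ?_) ?_
    · obtain ⟨w, hw, z, hz, rfl⟩ := exists_stdSimplex_fin_finrank_succ_of_mem_convexHull hne hx
      exact ⟨(w, z), ⟨hw, fun i _ => hz i⟩, rfl⟩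
    · rintro _ ⟨⟨w, z⟩, ⟨hw, hz⟩, rfl⟩
      exact mem_convexHull_of_exists_fintype w z hw.1 hw.2 (fun i => hz i trivial) rfl
  rw [hK_hull]
  exact ((isCompact_stdSimplex ℝ _).prod (isCompact_univ_pi fun _ => hK)).image (by fun_prop)

section Mixture

variable {X E : Type*} [MeasurableSpace X] [NormedAddCommGroup E] [NormedSpace ℝ E]

def mixtureValues (Θ : Set X) (g : X → E) : Set E :=
  {v | ∃ G : Measure X, IsProbabilityMeasure G ∧ G Θᶜ = 0 ∧ v = ∫ θ, g θ ∂G}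

variable [TopologicalSpace X] [OpensMeasurableSpace X] [T2Space X] {Θ : Set X} {g : X → E}

theorem ContinuousOn.integrable_of_measure_compl_eq_zero {F : Type*} [NormedAddCommGroup F]
    {h : X → F} (hh : ContinuousOn h Θ) (hΘ : IsCompact Θ) {G : Measure X} [IsFiniteMeasure G]
    (hG : G Θᶜ = 0) : Integrable h G := by
  rw [← Measure.restrict_eq_self_of_ae_mem (ae_iff.2 hG)]
  exact hh.integrableOn_compact hΘ

theorem integral_mem_convexHull_image [FiniteDimensional ℝ E] (hg : ContinuousOn g Θ)
    (hΘ : IsCompact Θ) {G : Measure X} [IsProbabilityMeasure G] (hG : G Θᶜ = 0) :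
    ∫ θ, g θ ∂G ∈ convexHull ℝ (g '' Θ) :=
  (convex_convexHull ℝ _).integral_mem (hΘ.image_of_continuousOn hg).convexHull.isClosed
    ((ae_iff.2 hG).mono fun _ hθ => subset_convexHull ℝ _ (mem_image_of_mem g hθ))
    (hg.integrable_of_measure_compl_eq_zero hΘ hG)

theorem image_subset_mixtureValues [CompleteSpace E] (hΘ : MeasurableSet Θ) :
    g '' Θ ⊆ mixtureValues Θ g := by
  rintro _ ⟨θ, hθ, rfl⟩
  refine ⟨Measure.dirac θ, inferInstance, ?_, (integral_dirac g θ).symm⟩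
  simp [Measure.dirac_apply' θ hΘ.compl, hθ]

theorem convex_mixtureValues (hg : ContinuousOn g Θ) (hΘ : IsCompact Θ) :
    Convex ℝ (mixtureValues Θ g) := by
  rintro _ ⟨G₁, hG₁, hG₁Θ, rfl⟩ _ ⟨G₂, hG₂, hG₂Θ, rfl⟩ a b ha hb hab
  refine ⟨ENNReal.ofReal a • G₁ + ENNReal.ofReal b • G₂, ⟨?_⟩, by simp [hG₁Θ, hG₂Θ], ?_⟩
  · simp [← ENNReal.ofReal_add ha hb, hab]
  · rw [integral_add_measure
      ((hg.integrable_of_measure_compl_eq_zero hΘ hG₁Θ).smul_measure ENNReal.ofReal_ne_top)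
      ((hg.integrable_of_measure_compl_eq_zero hΘ hG₂Θ).smul_measure ENNReal.ofReal_ne_top),
      integral_smul_measure, integral_smul_measure, ENNReal.toReal_ofReal ha,
      ENNReal.toReal_ofReal hb]

theorem mixtureValues_eq_convexHull_image [FiniteDimensional ℝ E] (hg : ContinuousOn g Θ)
    (hΘ : IsCompact Θ) : mixtureValues Θ g = convexHull ℝ (g '' Θ) := by
  refine Subset.antisymm ?_ <|
    convexHull_min (image_subset_mixtureValues hΘ.isClosed.measurableSet)
      (convex_mixtureValues hg hΘ)
  rintro _ ⟨G, hG, hGΘ, rfl⟩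
  exact integral_mem_convexHull_image hg hΘ hGΘ

end Mixture

theorem stmt_0_general {p d n : ℕ} (Θ : Set (EuclideanSpace ℝ (Fin p)))
    (hcomp : IsCompact Θ)
    (Y : Fin n → EuclideanSpace ℝ (Fin d))
    (f : EuclideanSpace ℝ (Fin d) → EuclideanSpace ℝ (Fin p) → ℝ)
    (hf : ∀ y, ContinuousOn (f y) Θ) :
    {v : Fin n → ℝ | ∃ G : Measure (EuclideanSpace ℝ (Fin p)),
        IsProbabilityMeasure G ∧ G Θᶜ = 0 ∧
        v = fun i => ∫ θ, f (Y i) θ ∂G}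
      = convexHull ℝ {v : Fin n → ℝ | ∃ θ ∈ Θ, v = fun i => f (Y i) θ} := by
  set g : EuclideanSpace ℝ (Fin p) → Fin n → ℝ := fun θ i => f (Y i) θ
  have hg : ContinuousOn g Θ := continuousOn_pi.2 fun i => hf (Y i)
  convert mixtureValues_eq_convexHull_image hg hcomp using 2
  · ext v
    refine exists_congr fun G => and_congr_right fun hG => and_congr_right fun hGΘ => ?_
    rw [funext (eval_integral fun i => (hf (Y i)).integrable_of_measure_compl_eq_zero hcomp hGΘ)]
  · ext v
    simp [g, eq_comm]

/-- The set of mixture value vectors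
`(∫ f(Y₁;θ) dG(θ), …, ∫ f(Yₙ;θ) dG(θ))`, where `G` ranges over Borel probability
measures on a nonempty compact set `Θ ⊆ ℝ^p`, equals the convex hull of the set
`Γ = {(f(Y₁;θ),…,f(Yₙ;θ)) : θ ∈ Θ}`. -/
theorem stmt_0 {p d n : ℕ} (Θ : Set (EuclideanSpace ℝ (Fin p)))
    (hne : Θ.Nonempty) (hcomp : IsCompact Θ)
    (Y : Fin n → EuclideanSpace ℝ (Fin d))
    (f : EuclideanSpace ℝ (Fin d) → EuclideanSpace ℝ (Fin p) → ℝ)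
    (hf : ∀ y, ContinuousOn (f y) Θ) :
    {v : Fin n → ℝ | ∃ G : Measure (EuclideanSpace ℝ (Fin p)),
        IsProbabilityMeasure G ∧ G Θᶜ = 0 ∧
        v = fun i => ∫ θ, f (Y i) θ ∂G}
      = convexHull ℝ {v : Fin n → ℝ | ∃ θ ∈ Θ, v = fun i => f (Y i) θ} :=
  stmt_0_general Θ hcomp Y f hf
end

section
/- Let X be a metric space, let G₀ be a Borel probability measure on X, let ε > 0, and let B₁,…,B_S be pairwise disjoint Borel subsets of X with G₀(X \ (B₁ ∪ ⋯ ∪ B_S)) = 0 and with B_s contained in the open ball of radius ε around a point x_s ∈ X for each s. Let π = (π₁,…,π_S) be non-negative weights summing to 1 with Σ_{s=1}^S |π_s − G₀(B_s)| ≤ ε, and let G_S = Σ_{s=1}^S π_s δ_{x_s}. Then for every Borel set A ⊆ X, G_S(A) ≤ G₀(A^ε) + ε, where A^ε = {y ∈ X : dist(y, A) < ε} is the ε-thickening of A; consequently the Lévy–Prokhorov distance between G_S and G₀ is at most ε. -/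
open MeasureTheory Metric

/-!
Each atom `x_s ∈ A` carries mass `π_s ≤ G₀(B_s) + |π_s - G₀(B_s)|`, and the cells `B_s` of these
atoms are disjoint subsets of `A^ε`; summing gives `G_S(A) ≤ G₀(A^ε) + ε`. Between probability
measures this one-sided bound already controls the Lévy–Prokhorov distance.
-/

namespace MeasureTheory.Measure

variable {X ι : Type*} [MeasurableSpace X]

open scoped Classical in
lemma finsetSum_smul_dirac_apply (t : Finset ι) (c : ι → ENNReal) (x : ι → X) {A : Set X}
    (hA : MeasurableSet A) :
    (∑ s ∈ t, c s • dirac (x s)) A = ∑ s ∈ t with x s ∈ A, c s := by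
  simp [finsetSum_apply, dirac_apply' _ hA, Finset.sum_filter, Set.indicator_apply]

lemma isProbabilityMeasure_sum_ofReal_smul_dirac [Fintype ι] {π : ι → ℝ} (hπ0 : ∀ s, 0 ≤ π s)
    (hπ1 : ∑ s, π s = 1) (x : ι → X) :
    IsProbabilityMeasure (∑ s, ENNReal.ofReal (π s) • dirac (x s)) := by
  constructor
  rw [finsetSum_smul_dirac_apply _ _ _ MeasurableSet.univ]
  simp [← ENNReal.ofReal_sum_of_nonneg fun s _ => hπ0 s, hπ1]

end MeasureTheory.Measure

section Covering

variable {X ι : Type*} [PseudoMetricSpace X] [MeasurableSpace X]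
  {B : ι → Set X} {x : ι → X} {ε : ℝ}

lemma sum_measure_le_measure_thickening (μ : Measure X) (hB : ∀ s, MeasurableSet (B s))
    (hdisj : Pairwise (Function.onFun Disjoint B)) (hball : ∀ s, B s ⊆ ball (x s) ε)
    (t : Finset ι) {A : Set X} (hxA : ∀ s ∈ t, x s ∈ A) :
    ∑ s ∈ t, μ (B s) ≤ μ (thickening ε A) := by
  rw [← measure_biUnion_finset (hdisj.set_pairwise _) fun s _ => hB s]
  exact measure_mono <| Set.iUnion₂_subset fun s hs y hy =>
    mem_thickening_iff.2 ⟨x s, hxA s hs, hball s hy⟩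

lemma sum_ofReal_smul_dirac_apply_le_measure_thickening_add [Fintype ι] (μ : Measure X)
    [IsFiniteMeasure μ] (hB : ∀ s, MeasurableSet (B s))
    (hdisj : Pairwise (Function.onFun Disjoint B)) (hball : ∀ s, B s ⊆ ball (x s) ε)
    (π : ι → ℝ) (hclose : ∑ s, |π s - (μ (B s)).toReal| ≤ ε) {A : Set X}
    (hA : MeasurableSet A) :
    (∑ s, ENNReal.ofReal (π s) • Measure.dirac (x s)) A ≤
      μ (thickening ε A) + ENNReal.ofReal ε := by
  classical
  set d : ι → ℝ := fun s => |π s - (μ (B s)).toReal|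
  have hπ_le (s : ι) : ENNReal.ofReal (π s) ≤ μ (B s) + ENNReal.ofReal (d s) := by
    rw [← ENNReal.ofReal_toReal (measure_ne_top μ (B s))]
    exact (ENNReal.ofReal_le_ofReal (by linarith [le_abs_self (π s - (μ (B s)).toReal)])).trans
      ENNReal.ofReal_add_le
  have hd_le (t : Finset ι) : ∑ s ∈ t, ENNReal.ofReal (d s) ≤ ENNReal.ofReal ε := by
    rw [← ENNReal.ofReal_sum_of_nonneg fun s _ => abs_nonneg _]
    exact ENNReal.ofReal_le_ofReal <| (Finset.sum_le_sum_of_subset_of_nonneg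
      (Finset.subset_univ t) fun s _ _ => abs_nonneg _).trans hclose
  rw [Measure.finsetSum_smul_dirac_apply _ _ _ hA]
  calc ∑ s with x s ∈ A, ENNReal.ofReal (π s)
      ≤ ∑ s with x s ∈ A, (μ (B s) + ENNReal.ofReal (d s)) := Finset.sum_le_sum fun s _ => hπ_le s
    _ = ∑ s with x s ∈ A, μ (B s) + ∑ s with x s ∈ A, ENNReal.ofReal (d s) :=
        Finset.sum_add_distrib
    _ ≤ μ (thickening ε A) + ENNReal.ofReal ε :=
        add_le_add (sum_measure_le_measure_thickening μ hB hdisj hball _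
          fun s hs => (Finset.mem_filter.1 hs).2) (hd_le _)

end Covering

theorem stmt_3_general {X : Type*} [MetricSpace X] [MeasurableSpace X] [BorelSpace X]
    (G₀ : Measure X) [IsProbabilityMeasure G₀]
    (ε : ℝ) (S : ℕ)
    (B : Fin S → Set X) (x : Fin S → X)
    (hB : ∀ s, MeasurableSet (B s))
    (hdisj : Pairwise (Function.onFun Disjoint B))
    (hball : ∀ s, B s ⊆ ball (x s) ε)
    (π : Fin S → ℝ) (hπ0 : ∀ s, 0 ≤ π s) (hπ1 : ∑ s, π s = 1)
    (hclose : ∑ s, |π s - (G₀ (B s)).toReal| ≤ ε) :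
    (∀ A : Set X, MeasurableSet A →
        (∑ s, (ENNReal.ofReal (π s)) • Measure.dirac (x s) : Measure X) A ≤
          G₀ (thickening ε A) + ENNReal.ofReal ε) ∧
      levyProkhorovDist (∑ s, (ENNReal.ofReal (π s)) • Measure.dirac (x s)) G₀ ≤ ε := by
  have hε : 0 ≤ ε := (Finset.sum_nonneg fun s _ => abs_nonneg _).trans hclose
  have key (A : Set X) (hA : MeasurableSet A) :=
    sum_ofReal_smul_dirac_apply_le_measure_thickening_add G₀ hB hdisj hball π hclose hA
  have := Measure.isProbabilityMeasure_sum_ofReal_smul_dirac hπ0 hπ1 x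
  refine ⟨key, levyProkhorovDist_le_of_forall_le _ _ hε fun η A hη hA => ?_⟩
  calc _ ≤ G₀ (thickening ε A) + ENNReal.ofReal ε := key A hA
    _ ≤ G₀ (thickening η A) + ENNReal.ofReal η := by gcongr

/-- Quantitative covering step for Lévy–Prokhorov approximation.
If `B₁,…,B_S` are pairwise disjoint Borel sets of full `G₀`-measure, each contained
in an `ε`-ball around `x_s`, and the weights `π` are within total distance `ε` of the
`G₀`-masses of the `B_s`, then the discrete measure `G_S = Σ π_s δ_{x_s}` satisfies
`G_S(A) ≤ G₀(A^ε) + ε` for all Borel `A`, and hence `ρ(G_S, G₀) ≤ ε`. -/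
theorem stmt_3 {X : Type*} [MetricSpace X] [MeasurableSpace X] [BorelSpace X]
    (G₀ : Measure X) [IsProbabilityMeasure G₀]
    (ε : ℝ) (hε : 0 < ε) (S : ℕ)
    (B : Fin S → Set X) (x : Fin S → X)
    (hB : ∀ s, MeasurableSet (B s))
    (hdisj : Pairwise (Function.onFun Disjoint B))
    (hnull : G₀ ((⋃ s, B s)ᶜ) = 0)
    (hball : ∀ s, B s ⊆ ball (x s) ε)
    (π : Fin S → ℝ) (hπ0 : ∀ s, 0 ≤ π s) (hπ1 : ∑ s, π s = 1)
    (hclose : ∑ s, |π s - (G₀ (B s)).toReal| ≤ ε) :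
    (∀ A : Set X, MeasurableSet A →
        (∑ s, (ENNReal.ofReal (π s)) • Measure.dirac (x s) : Measure X) A ≤
          G₀ (thickening ε A) + ENNReal.ofReal ε) ∧
      levyProkhorovDist (∑ s, (ENNReal.ofReal (π s)) • Measure.dirac (x s)) G₀ ≤ ε :=
  stmt_3_general G₀ ε S B x hB hdisj hball π hπ0 hπ1 hclose
end

section
/- Fix d ≥ 1, q > 0 and M > 0, and let φ(y;μ,qI_d) = (2πq)^{−d/2} exp(−‖y−μ‖²/(2q)) denote the d-dimensional spherical Gaussian density with mean μ and covariance qI_d. Then there exists a constant C < ∞ (depending only on d, q, M) such that for every Borel probability measure G₀ on [−M,M]^d and every integer S ≥ 1 there exists a probability measure G_S supported on at most S points of [−M,M]^d with sup_{y ∈ ℝ^d} | ∫ φ(y;μ,qI_d) dG_S(μ) − ∫ φ(y;μ,qI_d) dG₀(μ) | ≤ C · S^{−1/d}. -/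
open MeasureTheory

/-- The `d`-dimensional spherical Gaussian density with mean `μ` and covariance `q I_d`:
`φ(y;μ,qI_d) = (2πq)^{−d/2} exp(−‖y−μ‖²/(2q))`. -/
noncomputable def gaussDensity (d : ℕ) (q : ℝ) (μ y : EuclideanSpace ℝ (Fin d)) : ℝ :=
  (2 * Real.pi * q) ^ (-(d : ℝ) / 2) * Real.exp (-‖y - μ‖ ^ 2 / (2 * q))

/-!
Round every point of the cube `[-M, M]^d` down to a grid with `N = ⌊S^{1/d}⌋` points per side,
so `N^d ≤ S` nodes, and push `G₀` forward along this rounding. Each mean moves by at most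
`√d · 2M/N ≤ 4M√d · S^{-1/d}`, and the Gaussian density is Lipschitz in its mean uniformly in `y`,
so the two mixture densities differ by `O(S^{-1/d})` everywhere.
-/

open Real Set

lemma abs_exp_neg_mul_sq_sub_le {ε : ℝ} (hε : 0 < ε) (a b : ℝ) :
    |exp (-(ε * a * a)) - exp (-(ε * b * b))| ≤ 2 * √ε * |a - b| := by
  have hderiv : ∀ t, HasDerivAt (fun t => exp (-(ε * t * t))) (-2 * ε * mulExpNegMulSq ε t) t := by
    intro t
    have hinner : HasDerivAt (fun t => -(ε * t * t)) (-(2 * ε * t)) t :=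
      (((hasDerivAt_id' t).const_mul ε).fun_mul (hasDerivAt_id' t)).fun_neg.congr_deriv (by ring)
    convert hinner.exp using 1
    rw [mulExpNegMulSq]
    ring
  have hbound : ∀ t, ‖-2 * ε * mulExpNegMulSq ε t‖ ≤ 2 * √ε := by
    intro t
    calc ‖-2 * ε * mulExpNegMulSq ε t‖ = 2 * ε * |mulExpNegMulSq ε t| := by
          rw [norm_mul, norm_mul, norm_neg, Real.norm_eq_abs, Real.norm_eq_abs, Real.norm_eq_abs,
            abs_two, abs_of_pos hε]
      _ ≤ 2 * ε * (√ε)⁻¹ := by gcongr; exact abs_mulExpNegMulSq_le hε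
      _ = 2 * √ε := by rw [mul_assoc, ← div_eq_mul_inv, div_sqrt]
  simpa using convex_univ.norm_image_sub_le_of_norm_hasDerivWithin_le
    (fun t _ => (hderiv t).hasDerivWithinAt) (fun t _ => hbound t) (mem_univ b) (mem_univ a)

lemma continuous_gaussDensity_left (d : ℕ) (q : ℝ) (y : EuclideanSpace ℝ (Fin d)) :
    Continuous fun μ => gaussDensity d q μ y := by
  unfold gaussDensity
  fun_prop

lemma abs_gaussDensity_le (d : ℕ) {q : ℝ} (hq : 0 ≤ q) (μ y : EuclideanSpace ℝ (Fin d)) :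
    |gaussDensity d q μ y| ≤ (2 * π * q) ^ (-(d : ℝ) / 2) := by
  have hc : 0 ≤ (2 * π * q) ^ (-(d : ℝ) / 2) := by positivity
  rw [gaussDensity, abs_mul, abs_of_nonneg hc, abs_of_pos (exp_pos _)]
  refine mul_le_of_le_one_right hc (exp_le_one_iff.mpr ?_)
  have : 0 ≤ ‖y - μ‖ ^ 2 / (2 * q) := by positivity
  rw [neg_div]
  linarith

lemma abs_gaussDensity_sub_le (d : ℕ) {q : ℝ} (hq : 0 < q) (μ μ' y : EuclideanSpace ℝ (Fin d)) :
    |gaussDensity d q μ y - gaussDensity d q μ' y| ≤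
      (2 * π * q) ^ (-(d : ℝ) / 2) * (2 * √((2 * q)⁻¹)) * ‖μ - μ'‖ := by
  have hc : 0 ≤ (2 * π * q) ^ (-(d : ℝ) / 2) := by positivity
  have hexp (r : ℝ) : exp (-r ^ 2 / (2 * q)) = exp (-((2 * q)⁻¹ * r * r)) := by
    congr 1
    ring
  have hnorm : |‖y - μ‖ - ‖y - μ'‖| ≤ ‖μ - μ'‖ := by
    have := abs_norm_sub_norm_le (y - μ) (y - μ')
    rwa [sub_sub_sub_cancel_left, norm_sub_rev μ'] at this
  rw [gaussDensity, gaussDensity, ← mul_sub, abs_mul, abs_of_nonneg hc, hexp, hexp,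
    mul_assoc ((2 * π * q) ^ (-(d : ℝ) / 2))]
  refine mul_le_mul_of_nonneg_left ?_ hc
  exact (abs_exp_neg_mul_sq_sub_le (by positivity) _ _).trans (by gcongr)

lemma abs_integral_map_sub_integral_le {α : Type*} [MeasurableSpace α] {μ : Measure α}
    [IsFiniteMeasure μ] {g : α → α} (hg : Measurable g) {F : α → ℝ} (hF : Measurable F) {B : ℝ}
    (hFB : ∀ x, |F x| ≤ B) {ε : ℝ} (hε : ∀ᵐ x ∂μ, |F (g x) - F x| ≤ ε) :
    |∫ x, F x ∂μ.map g - ∫ x, F x ∂μ| ≤ ε * μ.real univ := by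
  have hint : ∀ f : α → ℝ, Measurable f → (∀ x, |f x| ≤ B) → Integrable f μ := fun f hf hfB =>
    .of_bound hf.aestronglyMeasurable B (.of_forall hfB)
  rw [integral_map hg.aemeasurable hF.aestronglyMeasurable,
    ← integral_sub (hint (fun x => F (g x)) (hF.comp hg) fun x => hFB (g x)) (hint F hF hFB)]
  exact norm_integral_le_of_norm_le_const (f := fun x => F (g x) - F x) hε

lemma EuclideanSpace.norm_le_sqrt_card_mul {ι : Type*} [Fintype ι] {x : EuclideanSpace ℝ ι}
    {r : ℝ} (hr : 0 ≤ r) (hx : ∀ i, |x i| ≤ r) : ‖x‖ ≤ √(Fintype.card ι) * r := by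
  calc ‖x‖ = √(∑ i, ‖x i‖ ^ 2) := EuclideanSpace.norm_eq x
    _ ≤ √(∑ _ : ι, r ^ 2) := by
      gcongr with i
      exact hx i
    _ = √(Fintype.card ι) * r := by
      rw [Finset.sum_const, Finset.card_univ, nsmul_eq_mul, sqrt_mul (Nat.cast_nonneg _),
        sqrt_sq hr]

section Grid

variable (M : ℝ) (N : ℕ)

noncomputable def gridPoint (k : ℕ) : ℝ := -M + 2 * M / N * k

noncomputable def gridIndex (x : ℝ) : ℕ := min ⌊(x + M) / (2 * M / N)⌋₊ (N - 1)

variable {M N}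

lemma measurable_gridIndex : Measurable (gridIndex M N) :=
  (measurable_from_top (f := fun n : ℕ => min n (N - 1))).comp
    (Nat.measurable_floor.comp ((measurable_add_const M).div_const _))

lemma gridIndex_lt (hN : 1 ≤ N) (x : ℝ) : gridIndex M N x < N := by
  have := min_le_right ⌊(x + M) / (2 * M / N)⌋₊ (N - 1)
  rw [gridIndex]
  omega

lemma gridPoint_mem_Icc (hM : 0 ≤ M) {k : ℕ} (hk : k < N) : gridPoint M N k ∈ Icc (-M) M := by
  have hN : (0 : ℝ) < N := by exact_mod_cast hk.pos
  have hkN : (k : ℝ) ≤ N := by exact_mod_cast hk.le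
  have hstep : 2 * M / N * k ≤ 2 * M := by
    rw [div_mul_eq_mul_div, div_le_iff₀ hN]
    exact mul_le_mul_of_nonneg_left hkN (by positivity)
  have hstep_nonneg : 0 ≤ 2 * M / N * k := by positivity
  constructor <;> unfold gridPoint <;> linarith

lemma abs_gridPoint_gridIndex_sub_le (hM : 0 < M) (hN : 1 ≤ N) {x : ℝ} (hx : x ∈ Icc (-M) M) :
    |gridPoint M N (gridIndex M N x) - x| ≤ 2 * M / N := by
  set h := 2 * M / N
  set u := (x + M) / h
  set k := gridIndex M N x
  have hN0 : (0 : ℝ) < N := by exact_mod_cast hN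
  have hh : 0 < h := by positivity
  have hu : 0 ≤ u := div_nonneg (by linarith [hx.1]) hh.le
  have hku : (k : ℝ) ≤ u := (Nat.cast_le.mpr (min_le_left _ _)).trans (Nat.floor_le hu)
  have huk : u ≤ k + 1 := by
    rcases le_total ⌊u⌋₊ (N - 1) with hfl | hfl
    · have : k = ⌊u⌋₊ := min_eq_left hfl
      rw [this]
      exact (Nat.lt_floor_add_one u).le
    · have : k = N - 1 := min_eq_right hfl
      rw [this, Nat.cast_sub hN, Nat.cast_one, sub_add_cancel]
      have hNh : (N : ℝ) * h = 2 * M := by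
        simp only [h]
        field_simp
      rw [div_le_iff₀ hh, hNh]
      linarith [hx.2]
  have hpoint : gridPoint M N k - x = h * (k - u) := by
    rw [gridPoint, mul_sub, mul_div_cancel₀ _ hh.ne']
    ring
  rw [hpoint, abs_mul, abs_of_pos hh]
  exact mul_le_of_le_one_right hh.le (abs_le.mpr ⟨by linarith, by linarith⟩)

variable (M N) (d : ℕ)

noncomputable def cubeGridRound (x : EuclideanSpace ℝ (Fin d)) : EuclideanSpace ℝ (Fin d) :=
  WithLp.toLp 2 fun i => gridPoint M N (gridIndex M N (x i))

noncomputable def cubeGrid : Finset (EuclideanSpace ℝ (Fin d)) :=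
  Finset.univ.image fun k : Fin d → Fin N => WithLp.toLp 2 fun i => gridPoint M N (k i)

variable {M N d}

lemma measurable_cubeGridRound : Measurable (cubeGridRound M N d) :=
  (WithLp.measurable_toLp _ _).comp <| measurable_pi_lambda _ fun i =>
    (measurable_from_top (f := gridPoint M N)).comp
      (measurable_gridIndex.comp ((measurable_pi_apply i).comp (WithLp.measurable_ofLp _ _)))

lemma card_cubeGrid_le : (cubeGrid M N d).card ≤ N ^ d :=
  Finset.card_image_le.trans (by simp)

lemma cubeGridRound_mem_cubeGrid (hN : 1 ≤ N) (x : EuclideanSpace ℝ (Fin d)) :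
    cubeGridRound M N d x ∈ cubeGrid M N d :=
  Finset.mem_image.mpr ⟨fun i => ⟨gridIndex M N (x i), gridIndex_lt hN _⟩, Finset.mem_univ _, rfl⟩

lemma coe_cubeGrid_subset (hM : 0 ≤ M) :
    (cubeGrid M N d : Set (EuclideanSpace ℝ (Fin d))) ⊆
      {x : EuclideanSpace ℝ (Fin d) | ∀ i, x i ∈ Icc (-M) M} := by
  intro x hx
  obtain ⟨k, -, rfl⟩ := Finset.mem_image.mp hx
  exact fun i => gridPoint_mem_Icc hM (k i).isLt

lemma norm_cubeGridRound_sub_le (hM : 0 < M) (hN : 1 ≤ N) {x : EuclideanSpace ℝ (Fin d)}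
    (hx : ∀ i, x i ∈ Icc (-M) M) : ‖cubeGridRound M N d x - x‖ ≤ √d * (2 * M / N) := by
  simpa using EuclideanSpace.norm_le_sqrt_card_mul (by positivity) fun i =>
    abs_gridPoint_gridIndex_sub_le hM hN (hx i)

end Grid

lemma exists_pow_le_and_inv_le (d : ℕ) {S : ℕ} (hS : 1 ≤ S) :
    ∃ N : ℕ, 1 ≤ N ∧ N ^ d ≤ S ∧ (N : ℝ)⁻¹ ≤ 2 * (S : ℝ) ^ (-(1 : ℝ) / d) := by
  have hS1 : (1 : ℝ) ≤ S := by exact_mod_cast hS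
  set x : ℝ := (S : ℝ) ^ ((1 : ℝ) / d)
  have hx1 : 1 ≤ x := one_le_rpow hS1 (by positivity)
  refine ⟨⌊x⌋₊, Nat.le_floor (by exact_mod_cast hx1), ?_, ?_⟩
  · have hpow : x ^ d ≤ S := by
      rw [← rpow_natCast, ← rpow_mul (by positivity)]
      refine (rpow_le_rpow_of_exponent_le hS1 ?_).trans_eq (rpow_one _)
      rcases Nat.eq_zero_or_pos d with rfl | hd
      · simp
      · rw [one_div_mul_cancel (by positivity)]
    exact_mod_cast (pow_le_pow_left₀ (Nat.cast_nonneg _) (Nat.floor_le (by positivity)) d).trans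
      hpow
  · have hN1 : (1 : ℝ) ≤ ⌊x⌋₊ := by exact_mod_cast Nat.le_floor (by exact_mod_cast hx1)
    have hx : x < ⌊x⌋₊ + 1 := Nat.lt_floor_add_one x
    rw [neg_div, rpow_neg (by positivity)]
    field_simp
    linarith

theorem stmt_6_general (d : ℕ) (q M : ℝ) (hq : 0 < q) (hM : 0 < M) :
    ∃ C : ℝ, ∀ G₀ : Measure (EuclideanSpace ℝ (Fin d)), IsProbabilityMeasure G₀ →
      G₀ ({x : EuclideanSpace ℝ (Fin d) | ∀ i, x i ∈ Set.Icc (-M) M}ᶜ) = 0 →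
      ∀ S : ℕ, 1 ≤ S →
        ∃ (GS : Measure (EuclideanSpace ℝ (Fin d)))
            (T : Finset (EuclideanSpace ℝ (Fin d))),
          IsProbabilityMeasure GS ∧ T.card ≤ S ∧
          (↑T : Set (EuclideanSpace ℝ (Fin d))) ⊆
            {x : EuclideanSpace ℝ (Fin d) | ∀ i, x i ∈ Set.Icc (-M) M} ∧
          GS ((↑T : Set (EuclideanSpace ℝ (Fin d)))ᶜ) = 0 ∧
          ∀ y : EuclideanSpace ℝ (Fin d),
            |(∫ μ, gaussDensity d q μ y ∂GS) - ∫ μ, gaussDensity d q μ y ∂G₀| ≤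
              C * (S : ℝ) ^ (-(1 : ℝ) / d) := by
  set L := (2 * π * q) ^ (-(d : ℝ) / 2) * (2 * √((2 * q)⁻¹))
  refine ⟨L * (√d * (4 * M)), fun G₀ _ hG₀ S hS => ?_⟩
  obtain ⟨N, hN, hNS, hNinv⟩ := exists_pow_le_and_inv_le d hS
  have hg : Measurable (cubeGridRound M N d) := measurable_cubeGridRound
  refine ⟨G₀.map (cubeGridRound M N d), cubeGrid M N d,
    Measure.isProbabilityMeasure_map hg.aemeasurable, card_cubeGrid_le.trans hNS,
    coe_cubeGrid_subset hM.le, ?_, fun y => ?_⟩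
  · have hempty : cubeGridRound M N d ⁻¹' (cubeGrid M N d : Set _)ᶜ = ∅ :=
      eq_empty_iff_forall_notMem.mpr fun x hx => hx (cubeGridRound_mem_cubeGrid hN x)
    rw [Measure.map_apply hg (cubeGrid M N d).finite_toSet.measurableSet.compl, hempty,
      measure_empty]
  · have hmove : ∀ᵐ μ ∂G₀, |gaussDensity d q (cubeGridRound M N d μ) y - gaussDensity d q μ y| ≤
        L * (√d * (4 * M)) * (S : ℝ) ^ (-(1 : ℝ) / d) := by
      filter_upwards [mem_ae_iff.mpr hG₀] with μ hμ
      calc _ ≤ L * ‖cubeGridRound M N d μ - μ‖ := abs_gaussDensity_sub_le d hq _ _ y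
        _ ≤ L * (√d * (2 * M * (N : ℝ)⁻¹)) := by
          gcongr
          exact div_eq_mul_inv (2 * M) (N : ℝ) ▸ norm_cubeGridRound_sub_le hM hN hμ
        _ ≤ L * (√d * (2 * M * (2 * (S : ℝ) ^ (-(1 : ℝ) / d)))) := by gcongr
        _ = _ := by ring
    simpa using abs_integral_map_sub_integral_le hg (continuous_gaussDensity_left d q y).measurable
      (fun μ => abs_gaussDensity_le d hq.le μ y) hmove

/-- Uniform approximation of spherical Gaussian location mixtures by
finite mixtures: any mixture with mixing measure supported on `[−M,M]^d` is uniformly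
approximated at rate `S^{−1/d}` by an `S`-point mixture. -/
theorem stmt_6 (d : ℕ) (hd : 1 ≤ d) (q M : ℝ) (hq : 0 < q) (hM : 0 < M) :
    ∃ C : ℝ, ∀ G₀ : Measure (EuclideanSpace ℝ (Fin d)), IsProbabilityMeasure G₀ →
      G₀ ({x : EuclideanSpace ℝ (Fin d) | ∀ i, x i ∈ Set.Icc (-M) M}ᶜ) = 0 →
      ∀ S : ℕ, 1 ≤ S →
        ∃ (GS : Measure (EuclideanSpace ℝ (Fin d)))
            (T : Finset (EuclideanSpace ℝ (Fin d))),
          IsProbabilityMeasure GS ∧ T.card ≤ S ∧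
          (↑T : Set (EuclideanSpace ℝ (Fin d))) ⊆
            {x : EuclideanSpace ℝ (Fin d) | ∀ i, x i ∈ Set.Icc (-M) M} ∧
          GS ((↑T : Set (EuclideanSpace ℝ (Fin d)))ᶜ) = 0 ∧
          ∀ y : EuclideanSpace ℝ (Fin d),
            |(∫ μ, gaussDensity d q μ y ∂GS) - ∫ μ, gaussDensity d q μ y ∂G₀| ≤
              C * (S : ℝ) ^ (-(1 : ℝ) / d) :=
  stmt_6_general d q M hq hM
end

section
/- Let u : ℝ^d → ℝ be Lebesgue-integrable and define g(x) = ∫_{ℝ^d} 1{ t_j < x_j for all j = 1,…,d } u(t) dt. Then for any two Borel probability measures μ and ν on ℝ^d, | ∫ g dμ − ∫ g dν | ≤ ( ∫_{ℝ^d} |u(t)| dt ) · sup_{t ∈ ℝ^d} | μ({x : x_j > t_j for all j}) − ν({x : x_j > t_j for all j}) |. -/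
/-!
Writing `g x = ∫ 1{(x, t) ∈ R} u(t) dt` for the relation `R = {(x, t) | t < x coordinatewise}`,
Fubini's theorem turns `∫ g dm` into `∫ m{x | (x, t) ∈ R} u(t) dt`, the integral of `u` against
the upper-orthant distribution function of `m`. The difference of two such integrals is then
bounded by `∫ |u|` times the sup-distance of the distribution functions. Only the measurability
of `R` matters.
-/

open MeasureTheory Set

namespace MeasureTheory

variable {X Y : Type*} [MeasurableSpace X] [MeasurableSpace Y] {r : X → Y → Prop}

theorem measurable_measureReal_setOf_rel (m : Measure X) [SFinite m]
    (hr : MeasurableSet {p : X × Y | r p.1 p.2}) :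
    Measurable fun t => m.real {x | r x t} :=
  (measurable_measure_prodMk_right hr).ennreal_toReal

theorem integral_integral_indicator_setOf_rel (m : Measure X) [IsFiniteMeasure m]
    {ρ : Measure Y} [SFinite ρ] (hr : MeasurableSet {p : X × Y | r p.1 p.2}) {u : Y → ℝ}
    (hu : Integrable u ρ) :
    ∫ x, ∫ t, {t | r x t}.indicator u t ∂ρ ∂m = ∫ t, m.real {x | r x t} * u t ∂ρ := by
  have hint : Integrable (Function.uncurry fun x t => {t | r x t}.indicator u t) (m.prod ρ) :=
    (hu.comp_snd m).indicator hr
  rw [integral_integral_swap hint]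
  congr 1 with t
  have hslice : (fun x => {t | r x t}.indicator u t) = {x | r x t}.indicator fun _ => u t := by
    ext x
    by_cases h : r x t <;> simp [h]
  rw [hslice, ← smul_eq_mul]
  exact integral_indicator_const (u t) (measurable_prodMk_right hr)

theorem abs_integral_mul_sub_integral_mul_le {ρ : Measure Y} {F G u : Y → ℝ}
    (hF : Integrable (fun t => F t * u t) ρ) (hG : Integrable (fun t => G t * u t) ρ)
    (hu : Integrable u ρ) (hbdd : BddAbove (range fun t => |F t - G t|)) :
    |∫ t, F t * u t ∂ρ - ∫ t, G t * u t ∂ρ| ≤ (∫ t, |u t| ∂ρ) * ⨆ t, |F t - G t| := by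
  rw [← integral_sub hF hG, ← integral_mul_const]
  refine (abs_integral_le_integral_abs).trans <|
    integral_mono_of_nonneg (.of_forall fun t => abs_nonneg _) (hu.abs.mul_const _)
      (.of_forall fun t => ?_)
  dsimp only
  rw [← sub_mul, abs_mul, mul_comm]
  exact mul_le_mul_of_nonneg_left (le_ciSup hbdd t) (abs_nonneg _)

theorem bddAbove_range_abs_measureReal_sub (m₁ m₂ : Measure X) [IsFiniteMeasure m₁]
    [IsFiniteMeasure m₂] {ι : Type*} (s : ι → Set X) :
    BddAbove (range fun t => |m₁.real (s t) - m₂.real (s t)|) := by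
  refine ⟨m₁.real univ + m₂.real univ, ?_⟩
  rintro _ ⟨t, rfl⟩
  have h₁ : m₁.real (s t) ≤ m₁.real univ := measureReal_mono (subset_univ _)
  have h₂ : m₂.real (s t) ≤ m₂.real univ := measureReal_mono (subset_univ _)
  have := measureReal_nonneg (μ := m₁) (s := s t)
  have := measureReal_nonneg (μ := m₂) (s := s t)
  exact abs_sub_le_iff.mpr ⟨by linarith, by linarith⟩

theorem abs_integral_integral_indicator_sub_le (m₁ m₂ : Measure X) [IsFiniteMeasure m₁]
    [IsFiniteMeasure m₂] {ρ : Measure Y} [SFinite ρ] (hr : MeasurableSet {p : X × Y | r p.1 p.2})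
    {u : Y → ℝ} (hu : Integrable u ρ) :
    |∫ x, ∫ t, {t | r x t}.indicator u t ∂ρ ∂m₁ - ∫ x, ∫ t, {t | r x t}.indicator u t ∂ρ ∂m₂| ≤
      (∫ t, |u t| ∂ρ) * ⨆ t, |m₁.real {x | r x t} - m₂.real {x | r x t}| := by
  have hint : ∀ (m : Measure X) [IsFiniteMeasure m],
      Integrable (fun t => m.real {x | r x t} * u t) ρ := fun m _ =>
    hu.bdd_mul (measurable_measureReal_setOf_rel m hr).aestronglyMeasurable
      (c := m.real univ) (.of_forall fun t => by
        rw [Real.norm_of_nonneg measureReal_nonneg]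
        exact measureReal_mono (subset_univ _))
  rw [integral_integral_indicator_setOf_rel m₁ hr hu,
    integral_integral_indicator_setOf_rel m₂ hr hu]
  exact abs_integral_mul_sub_integral_mul_le (hint m₁) (hint m₂) hu
    (bddAbove_range_abs_measureReal_sub m₁ m₂ _)

end MeasureTheory

/-- If `g` is the iterated antiderivative
`g(x) = ∫ 1{t_j < x_j ∀j} u(t) dt` of an integrable function `u`, then for Borel
probability measures `μ, ν`, the difference `|∫ g dμ − ∫ g dν|` is bounded by
`(∫|u|)` times the uniform distance between the upper-orthant distribution
functions of `μ` and `ν`. -/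
theorem stmt_10 {d : ℕ} (u : EuclideanSpace ℝ (Fin d) → ℝ) (hu : Integrable u)
    (μ ν : Measure (EuclideanSpace ℝ (Fin d)))
    [IsProbabilityMeasure μ] [IsProbabilityMeasure ν] :
    |(∫ x, (∫ t, ({s : EuclideanSpace ℝ (Fin d) | ∀ j, s j < x j}).indicator u t) ∂μ) -
        ∫ x, (∫ t, ({s : EuclideanSpace ℝ (Fin d) | ∀ j, s j < x j}).indicator u t) ∂ν| ≤
      (∫ t, |u t|) *
        ⨆ t : EuclideanSpace ℝ (Fin d),
          |(μ {x | ∀ j, t j < x j}).toReal - (ν {x | ∀ j, t j < x j}).toReal| := by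
  have hr : MeasurableSet
      {p : EuclideanSpace ℝ (Fin d) × EuclideanSpace ℝ (Fin d) | ∀ j, p.2 j < p.1 j} := by
    measurability
  exact abs_integral_integral_indicator_sub_le (r := fun x t => ∀ j, t j < x j) μ ν hr hu
end
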